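/- arXiv:2406.09114 — 6 statements merged into one kernel-verified Lean document; each statement's English description precedes it below -/
import Mathlib

section
/- Let p be a prime and f a polynomial with integer coefficients. Then f is a permutation polynomial mod p² if and only if f is a permutation polynomial mod p and the congruence f'(x) ≡ 0 (mod p) has no solution x ∈ ℤ. -/
/-- `f` is a permutation polynomial mod `n`: the induced map on `ℤ/nℤ` is a bijection. -/
def IsPermPoly (f : Polynomial ℤ) (n : ℕ) : Prop :=
  Function.Bijective fun x : ZMod n => (f.map (Int.castRingHom (ZMod n))).eval x

lemma permPoly_iff_int (f : Polynomial ℤ) (n : ℕ) [NeZero n] :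
    IsPermPoly f n ↔ ∀ a b : ℤ, (n:ℤ) ∣ (f.eval a - f.eval b) → (n:ℤ) ∣ (a - b) := by
  have hcast : ∀ a : ℤ, (f.map (Int.castRingHom (ZMod n))).eval (a : ZMod n)
      = ((f.eval a : ℤ) : ZMod n) := fun a => Polynomial.eval_intCast_map _ f a
  have hdvd : ∀ a b : ℤ, ((a : ZMod n) = (b : ZMod n)) ↔ (n:ℤ) ∣ (a - b) := by
    intro a b
    rw [ZMod.intCast_eq_intCast_iff, Int.modEq_iff_dvd, dvd_sub_comm]
  constructor
  · rintro ⟨hinj, _⟩ a b hab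
    rw [← hdvd]
    apply hinj
    simp only [hcast]
    rw [hdvd]
    exact hab
  · intro H
    rw [IsPermPoly, ← Finite.injective_iff_bijective]
    intro x y hxy
    obtain ⟨a, rfl⟩ := ZMod.intCast_surjective (n := n) x
    obtain ⟨b, rfl⟩ := ZMod.intCast_surjective (n := n) y
    simp only [hcast] at hxy
    rw [hdvd] at hxy ⊢
    exact H a b hxy

lemma exists_solve (p : ℕ) (hp : p.Prime) (c m : ℤ) (hc : ¬ (p:ℤ) ∣ c) :
    ∃ t : ℤ, (p:ℤ) ∣ t * c + m := by
  haveI : Fact p.Prime := ⟨hp⟩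
  have hc0 : (c : ZMod p) ≠ 0 := fun h => hc ((ZMod.intCast_zmod_eq_zero_iff_dvd c p).mp h)
  obtain ⟨t, ht⟩ := ZMod.intCast_surjective ((-m : ZMod p) * (c : ZMod p)⁻¹)
  refine ⟨t, (ZMod.intCast_zmod_eq_zero_iff_dvd _ p).mp ?_⟩
  push_cast
  rw [ht]
  field_simp
  ring

theorem noebauer_criterion (p : ℕ) (hp : p.Prime) (f : Polynomial ℤ) :
    IsPermPoly f (p ^ 2) ↔
      IsPermPoly f p ∧ ∀ x : ℤ, ¬ ((p : ℤ) ∣ f.derivative.eval x) := by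
  haveI : NeZero p := ⟨hp.ne_zero⟩
  haveI : NeZero (p ^ 2) := ⟨pow_ne_zero 2 hp.ne_zero⟩
  have hp1 : (1:ℤ) < (p:ℤ) := by exact_mod_cast hp.one_lt
  rw [permPoly_iff_int, permPoly_iff_int]
  push_cast
  constructor
  · intro H
    have hderiv : ∀ x : ℤ, ¬ ((p : ℤ) ∣ f.derivative.eval x) := by
      intro x hx
      obtain ⟨k, hk⟩ := f.binomExpansion x (p : ℤ)
      obtain ⟨c, hc⟩ := hx
      have h1 : (p:ℤ)^2 ∣ f.eval (x + p) - f.eval x :=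
        ⟨c + k, by rw [hk, hc]; ring⟩
      have := H _ _ h1
      simp only [add_sub_cancel_left] at this
      obtain ⟨d, hd⟩ := this
      have h6 : (1:ℤ) = p * d :=
        mul_left_cancel₀ (by positivity : (p:ℤ) ≠ 0) (by linear_combination hd)
      have := Int.le_of_dvd one_pos ⟨d, h6⟩
      linarith
    refine ⟨?_, hderiv⟩
    intro a b hab
    obtain ⟨m, hm⟩ := hab
    obtain ⟨t, ht⟩ := exists_solve p hp (f.derivative.eval a) m (hderiv a)
    obtain ⟨k, hk⟩ := f.binomExpansion a ((p:ℤ) * t)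
    obtain ⟨s, hs⟩ := ht
    have h2 : (p:ℤ)^2 ∣ f.eval (a + p * t) - f.eval b :=
      ⟨s + k * t^2, by rw [hk]; linear_combination hm + (p:ℤ) * hs⟩
    obtain ⟨d, hd⟩ := H _ _ h2
    exact ⟨p * d - t, by linear_combination hd⟩
  · rintro ⟨Hp, hderiv⟩ a b hab
    have hab1 : (p:ℤ) ∣ f.eval a - f.eval b := dvd_trans ⟨p, by ring⟩ hab
    obtain ⟨t, ht⟩ := Hp a b hab1
    obtain ⟨k, hk⟩ := f.binomExpansion b ((p:ℤ) * t)
    have hae : a = b + (p:ℤ) * t := by linarith [ht]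
    rw [hae] at hab
    rw [hk] at hab
    have h3 : (p:ℤ)^2 ∣ f.derivative.eval b * ((p:ℤ)*t) := by
      have : f.eval b + f.derivative.eval b * ((p:ℤ)*t) + k * ((p:ℤ)*t)^2 - f.eval b
          = f.derivative.eval b * ((p:ℤ)*t) + k * t^2 * (p:ℤ)^2 := by ring
      rw [this] at hab
      have := dvd_sub hab (Dvd.dvd.mul_left dvd_rfl (k * t^2))
      simpa using this
    have h4 : (p:ℤ) ∣ f.derivative.eval b * t := by
      obtain ⟨d, hd⟩ := h3
      exact ⟨d, mul_left_cancel₀ (by positivity : (p:ℤ) ≠ 0) (by linear_combination hd)⟩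
    have h5 : (p:ℤ) ∣ t := (Int.Prime.dvd_mul' (by exact_mod_cast hp) h4).resolve_left (hderiv b)
    obtain ⟨s, hs⟩ := h5
    rw [hae, hs]
    exact ⟨s, by ring⟩
end

section
/- Let p be a prime, a ∈ ℤ with p ∤ a, b ∈ ℤ, and n > 1. Then f(x) = a·x^n + b is never simultaneously a permutation polynomial mod p and a permutation polynomial mod p². -/
theorem axn_b_never_perm (p : ℕ) (hp : p.Prime) (a b : ℤ) (ha : ¬ (p : ℤ) ∣ a)
    (n : ℕ) (hn : 1 < n) :
    ¬ (IsPermPoly (Polynomial.C a * Polynomial.X ^ n + Polynomial.C b) p ∧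
       IsPermPoly (Polynomial.C a * Polynomial.X ^ n + Polynomial.C b) (p ^ 2)) := by
  rintro ⟨-, h2⟩
  have hinj := h2.injective
  have hpn : ((p : ZMod (p ^ 2)) : ZMod (p ^ 2)) ^ n = 0 := by
    have : ((p : ℕ) : ZMod (p ^ 2)) ^ n = ((p ^ n : ℕ) : ZMod (p ^ 2)) := by
      push_cast; ring
    rw [this, ZMod.natCast_eq_zero_iff]
    exact pow_dvd_pow p hn
  have key : (fun x : ZMod (p ^ 2) =>
      ((Polynomial.C a * Polynomial.X ^ n + Polynomial.C b).map
        (Int.castRingHom (ZMod (p ^ 2)))).eval x) (p : ZMod (p ^ 2)) =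
      (fun x : ZMod (p ^ 2) =>
      ((Polynomial.C a * Polynomial.X ^ n + Polynomial.C b).map
        (Int.castRingHom (ZMod (p ^ 2)))).eval x) 0 := by
    simp [hpn, zero_pow (by omega : n ≠ 0)]
  have := hinj key
  have hne : ((p : ℕ) : ZMod (p ^ 2)) ≠ 0 := by
    rw [Ne, ZMod.natCast_eq_zero_iff]
    intro hdvd
    have hp2 := hp.two_le
    have := Nat.le_of_dvd (by omega) hdvd
    nlinarith
  exact hne this
end

section
/- Let p be a prime and f a polynomial with integer coefficients such that (f(n))_{n≥1} is uniformly distributed in ℤ_p (equivalently, f is a permutation polynomial mod p^k for all k). Then the sequence (f(n)) does not have p-adic Poissonian pair correlations: for any 0 < s < 1, along N = p^k the counting function F_{N,1,p}(s) equals 0 and hence does not converge to 1. -/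
open scoped Classical

/-- The Haar measure of the disk `D_p(0, r) = {x ∈ ℤ_p : ‖x‖ ≤ r}`: the largest value
`p^{-k}` with `p^{-k} ≤ r` (and `0` if no such `k` exists, e.g. for `r ≤ 0`). -/
noncomputable def haarBall (p : ℕ) (r : ℝ) : ℝ :=
  sSup {v : ℝ | ∃ k : ℕ, v = (p : ℝ) ^ (-(k : ℤ)) ∧ (p : ℝ) ^ (-(k : ℤ)) ≤ r}

/-- The pair correlation counting function `F_{N,1,p}(s)` for a sequence `x` in `ℤ_p`. -/
noncomputable def pairCorr (p : ℕ) [Fact p.Prime] (x : ℕ → ℤ_[p]) (N : ℕ) (s : ℝ) : ℝ :=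
  (1 / (N : ℝ) ^ 2) * (1 / haarBall p (s / N)) *
    (((Finset.Icc 1 N ×ˢ Finset.Icc 1 N).filter
      (fun q => q.1 ≠ q.2 ∧ ‖x q.1 - x q.2‖ ≤ s / N)).card : ℝ)

theorem poly_no_poissonian_pair_correlations (p : ℕ) [Fact p.Prime] (f : Polynomial ℤ)
    (hf : ∀ k : ℕ, 1 ≤ k → IsPermPoly f (p ^ k)) (s : ℝ) (hs0 : 0 < s) (hs1 : s < 1) :
    (∀ k : ℕ, 1 ≤ k →
      pairCorr p (fun n => ((f.eval (n : ℤ) : ℤ) : ℤ_[p])) (p ^ k) s = 0) ∧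
    ¬ Filter.Tendsto (fun N => pairCorr p (fun n => ((f.eval (n : ℤ) : ℤ) : ℤ_[p])) N s)
        Filter.atTop (nhds 1) := by
  have hp : p.Prime := Fact.out
  have key : ∀ k : ℕ, 1 ≤ k →
      pairCorr p (fun n => ((f.eval (n : ℤ) : ℤ) : ℤ_[p])) (p ^ k) s = 0 := by
    intro k hk
    have hpk : (0 : ℝ) < ((p ^ k : ℕ) : ℝ) := by
      have := hp.pos
      positivity
    unfold pairCorr
    rw [Finset.filter_eq_empty_iff.mpr ?_]
    · simp
    · rintro ⟨n, m⟩ hq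
      simp only [Finset.mem_product, Finset.mem_Icc] at hq
      rintro ⟨hne, hnorm⟩
      simp only at hnorm
      -- the norm bound forces p^k ∣ f(n) - f(m)
      have hlt : s / ((p ^ k : ℕ) : ℝ) ≤ (p : ℝ) ^ (-(k : ℤ)) := by
        rw [zpow_neg, zpow_natCast, ← Nat.cast_pow]
        rw [div_le_iff₀ hpk]
        have : (0 : ℝ) < ((p ^ k : ℕ) : ℝ)⁻¹ := by positivity
        rw [inv_mul_cancel₀ (ne_of_gt hpk)]
        exact le_of_lt hs1
      have hnorm' : ‖((f.eval (n : ℤ) - f.eval (m : ℤ) : ℤ) : ℤ_[p])‖ ≤ (p : ℝ) ^ (-(k : ℤ)) := by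
        push_cast
        exact le_trans hnorm hlt
      have hdvd : ((p : ℤ) ^ k) ∣ f.eval (n : ℤ) - f.eval (m : ℤ) :=
        PadicInt.norm_int_le_pow_iff_dvd.mp hnorm'
      -- hence the images in ZMod (p^k) agree
      have hzmod : ((f.eval (n : ℤ) : ℤ) : ZMod (p ^ k)) = ((f.eval (m : ℤ) : ℤ) : ZMod (p ^ k)) := by
        rw [← sub_eq_zero, ← Int.cast_sub]
        rw [ZMod.intCast_zmod_eq_zero_iff_dvd]
        exact_mod_cast hdvd
      -- permutation polynomial: injectivity gives n ≡ m mod p^k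
      have hinj := (hf k hk).injective
      have heval : ∀ a : ℕ, (f.map (Int.castRingHom (ZMod (p ^ k)))).eval ((a : ℤ) : ZMod (p ^ k))
          = ((f.eval (a : ℤ) : ℤ) : ZMod (p ^ k)) := by
        intro a
        rw [Polynomial.eval_map]
        exact Polynomial.eval₂_at_apply (Int.castRingHom (ZMod (p ^ k))) (a : ℤ)
      have hcast : ((n : ℤ) : ZMod (p ^ k)) = ((m : ℤ) : ZMod (p ^ k)) := by
        apply hinj
        simp only [heval, hzmod]
      have hmod : ((p ^ k : ℕ) : ℤ) ∣ (m : ℤ) - (n : ℤ) :=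
        ((ZMod.intCast_eq_intCast_iff _ _ _).mp hcast).dvd
      have hzero : (m : ℤ) - (n : ℤ) = 0 := by
        apply Int.eq_zero_of_abs_lt_dvd hmod
        have h1n : (1 : ℤ) ≤ (n : ℤ) := by exact_mod_cast hq.1.1
        have h2n : (n : ℤ) ≤ ((p ^ k : ℕ) : ℤ) := by exact_mod_cast hq.1.2
        have h1m : (1 : ℤ) ≤ (m : ℤ) := by exact_mod_cast hq.2.1
        have h2m : (m : ℤ) ≤ ((p ^ k : ℕ) : ℤ) := by exact_mod_cast hq.2.2
        rw [abs_lt]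
        constructor <;> linarith
      exact hne (by omega)
  refine ⟨key, ?_⟩
  intro h
  have hcomp : Filter.Tendsto (fun k : ℕ =>
      pairCorr p (fun n => ((f.eval (n : ℤ) : ℤ) : ℤ_[p])) (p ^ k) s)
      Filter.atTop (nhds 1) :=
    h.comp (tendsto_pow_atTop_atTop_of_one_lt hp.one_lt)
  have hzero : Filter.Tendsto (fun k : ℕ =>
      pairCorr p (fun n => ((f.eval (n : ℤ) : ℤ) : ℤ_[p])) (p ^ k) s)
      Filter.atTop (nhds 0) := by
    apply Filter.Tendsto.congr' _ tendsto_const_nhds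
    filter_upwards [Filter.eventually_ge_atTop 1] with k hk
    exact (key k hk).symm
  exact one_ne_zero (tendsto_nhds_unique hcomp hzero)
end

section
/- Let p be a prime and f a polynomial with integer coefficients that is a permutation polynomial mod p and mod p². Then the sequence x_n = f(n) satisfies D_N(x_n) = O(1/N): there is a constant C such that D_N(x_n) ≤ C/N for all N ≥ 1. -/
open scoped Classical

noncomputable def padicDisc (p : ℕ) [Fact p.Prime] (x : ℕ → ℤ_[p]) (N : ℕ) : ℝ :=
  ⨆ zk : ℤ_[p] × ℕ,
    |(((Finset.Icc 1 N).filter fun n => ‖x n - zk.1‖ ≤ (p : ℝ) ^ (-(zk.2 : ℤ))).card : ℝ) / N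
      - (p : ℝ) ^ (-(zk.2 : ℤ))|

namespace PermPolyAux

lemma eval_map_cast (f : Polynomial ℤ) (m : ℕ) (a : ℤ) :
    (f.map (Int.castRingHom (ZMod m))).eval ((a : ZMod m)) = ((f.eval a : ℤ) : ZMod m) := by
  rw [Polynomial.eval_map]
  exact Polynomial.eval₂_hom (Int.castRingHom (ZMod m)) a

/-- Two integers congruent mod m have the same polynomial value mod m. -/
lemma eval_congr (f : Polynomial ℤ) (m : ℕ) {a b : ℤ} (h : (m : ℤ) ∣ a - b) :
    ((f.eval a : ℤ) : ZMod m) = ((f.eval b : ℤ) : ZMod m) := by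
  have hd : (m : ℤ) ∣ f.eval a - f.eval b := h.trans (Polynomial.sub_dvd_eval_sub a b f)
  have := (ZMod.intCast_zmod_eq_zero_iff_dvd (f.eval a - f.eval b) m).mpr hd
  exact sub_eq_zero.mp (by push_cast at this; linear_combination this)

/-- Permutation mod p^2 forces the derivative to be a unit mod p. -/
lemma deriv_not_dvd {p : ℕ} [Fact p.Prime] {f : Polynomial ℤ}
    (h2 : IsPermPoly f (p ^ 2)) (a : ℤ) : ¬ (p : ℤ) ∣ f.derivative.eval a := by
  intro hd
  obtain ⟨s, hs⟩ := hd
  obtain ⟨K, hK⟩ := f.binomExpansion a p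
  have hp : (1 : ℕ) < p := (Fact.out : p.Prime).one_lt
  have heq : ((f.eval (a + p) : ℤ) : ZMod (p ^ 2)) = ((f.eval a : ℤ) : ZMod (p ^ 2)) := by
    have hdvd : ((p : ℤ) ^ 2) ∣ f.eval (a + p) - f.eval a := by
      rw [hK, hs]
      ring_nf
      exact ⟨s + K, by ring⟩
    have : (((p ^ 2 : ℕ) : ℤ)) ∣ f.eval (a + p) - f.eval a := by push_cast; exact hdvd
    have h0 := (ZMod.intCast_zmod_eq_zero_iff_dvd (f.eval (a + p) - f.eval a) (p ^ 2)).mpr this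
    exact sub_eq_zero.mp (by push_cast at h0; linear_combination h0)
  have hinj := h2.injective
  have : ((a + p : ℤ) : ZMod (p ^ 2)) = ((a : ℤ) : ZMod (p ^ 2)) := by
    apply hinj
    show (f.map (Int.castRingHom (ZMod (p ^ 2)))).eval _ = (f.map (Int.castRingHom (ZMod (p ^ 2)))).eval _
    rw [eval_map_cast, eval_map_cast, heq]
  have hpz : ((p : ℤ) : ZMod (p ^ 2)) = 0 := by
    have h' := sub_eq_zero.mpr this
    push_cast at h' ⊢
    linear_combination h'
  rw [Int.cast_natCast, ZMod.natCast_eq_zero_iff] at hpz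
  have := Nat.le_of_dvd (by omega) hpz
  nlinarith


/-- Surjectivity over ℤ at all levels p^k. -/
lemma surj_int {p : ℕ} [Fact p.Prime] {f : Polynomial ℤ}
    (h1 : IsPermPoly f p) (h2 : IsPermPoly f (p ^ 2)) :
    ∀ k : ℕ, ∀ y : ℤ, ∃ a : ℤ, ((p : ℤ) ^ k) ∣ f.eval a - y := by
  have hp : (1 : ℕ) < p := (Fact.out : p.Prime).one_lt
  haveI : NeZero p := ⟨by omega⟩
  have base : ∀ y : ℤ, ∃ a : ℤ, ((p : ℤ) ^ 1) ∣ f.eval a - y := by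
    intro y
    obtain ⟨x, hx⟩ := h1.surjective ((y : ZMod p))
    refine ⟨(x.val : ℤ), ?_⟩
    have : ((f.eval (x.val : ℤ) : ℤ) : ZMod p) = ((y : ZMod p)) := by
      rw [← eval_map_cast]
      have hxx : (((x.val : ℤ)) : ZMod p) = x := by
        push_cast
        exact ZMod.natCast_rightInverse x
      rw [hxx]
      exact hx
    have h0 : ((f.eval (x.val : ℤ) - y : ℤ) : ZMod p) = 0 := by push_cast; rw [this]; ring
    rw [ZMod.intCast_zmod_eq_zero_iff_dvd] at h0
    simpa using h0
  intro k
  induction k with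
  | zero => intro y; exact ⟨0, by simp⟩
  | succ k ih =>
    rcases Nat.eq_zero_or_pos k with rfl | hk
    · exact base
    intro y
    obtain ⟨a, s, hs⟩ := ih y
    set d : ℤ := f.derivative.eval a with hd_def
    have hd : ¬ (p : ℤ) ∣ d := deriv_not_dvd h2 a
    have hdz : ((d : ZMod p)) ≠ 0 := by
      rw [Ne, ZMod.intCast_zmod_eq_zero_iff_dvd]
      exact hd
    set t : ℤ := ((((-s : ℤ) : ZMod p) * ((d : ZMod p))⁻¹).val : ℤ) with ht_def
    obtain ⟨K, hK⟩ := f.binomExpansion a (t * (p : ℤ) ^ k)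
    refine ⟨a + t * (p : ℤ) ^ k, ?_⟩
    have key : (p : ℤ) ∣ s + d * t := by
      have : ((s + d * t : ℤ) : ZMod p) = 0 := by
        push_cast
        have htv : ((t : ZMod p)) = (((-s : ℤ) : ZMod p) * ((d : ZMod p))⁻¹) := by
          rw [ht_def]
          push_cast
          exact ZMod.natCast_rightInverse _
        rw [htv]
        push_cast
        field_simp
        ring
      rwa [ZMod.intCast_zmod_eq_zero_iff_dvd] at this
    obtain ⟨u, hu⟩ := key
    have h2k : (p : ℤ) ^ (k + 1) ∣ (K * t ^ 2) * ((p : ℤ) ^ k) ^ 2 := by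
      refine Dvd.dvd.mul_left ?_ (K * t ^ 2)
      rw [← pow_mul]
      exact pow_dvd_pow _ (by omega)
    obtain ⟨v, hv⟩ := h2k
    refine ⟨u + v, ?_⟩
    have : f.eval (a + t * (p : ℤ) ^ k) - y
        = (p : ℤ) ^ k * (s + d * t) + (K * t ^ 2) * ((p : ℤ) ^ k) ^ 2 := by
      rw [hK]
      have : f.eval a - y = (p : ℤ) ^ k * s := hs
      ring_nf
      ring_nf at this
      linarith [this]
    rw [this, hu, hv]
    ring

/-- f is a permutation polynomial mod p^k for every k. -/
lemma perm_pow {p : ℕ} [Fact p.Prime] {f : Polynomial ℤ}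
    (h1 : IsPermPoly f p) (h2 : IsPermPoly f (p ^ 2)) (k : ℕ) :
    IsPermPoly f (p ^ k) := by
  have hp : (1 : ℕ) < p := (Fact.out : p.Prime).one_lt
  haveI : NeZero (p ^ k) := ⟨pow_ne_zero _ (by omega)⟩
  rw [IsPermPoly, ← Finite.surjective_iff_bijective]
  intro y
  obtain ⟨a, ha⟩ := surj_int h1 h2 k ((y.val : ℤ))
  refine ⟨((a : ZMod (p ^ k))), ?_⟩
  show (f.map (Int.castRingHom (ZMod (p ^ k)))).eval _ = y
  rw [eval_map_cast]
  have h0 : ((f.eval a - (y.val : ℤ) : ℤ) : ZMod (p ^ k)) = 0 := by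
    rw [ZMod.intCast_zmod_eq_zero_iff_dvd]
    push_cast
    exact ha
  have heq : ((f.eval a : ℤ) : ZMod (p ^ k)) = ((y.val : ℕ) : ZMod (p ^ k)) := by
    push_cast at h0
    exact sub_eq_zero.mp h0
  rw [heq]
  exact ZMod.natCast_rightInverse y


lemma card_residue (m : ℕ) (hm : 1 ≤ m) (r : ℕ) (hr1 : 1 ≤ r) (hr2 : r ≤ m) (N : ℕ) :
    ((Finset.Icc 1 N).filter (fun n => n % m = r % m)).card = (N + m - r) / m := by
  induction N with
  | zero =>
    rw [Finset.Icc_eq_empty (by omega), Finset.filter_empty, Finset.card_empty]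
    exact (Nat.div_eq_of_lt (by omega)).symm
  | succ N ih =>
    have hins : Finset.Icc 1 (N + 1) = insert (N + 1) (Finset.Icc 1 N) :=
      (Finset.insert_Icc_right_eq_Icc_add_one (by omega)).symm
    have hrm : r + (m - r) = m := by omega
    have hm0 : Nat.ModEq m (r + (m - r)) 0 := by
      rw [hrm]; exact (Nat.modEq_zero_iff_dvd).mpr dvd_rfl
    have key : ((N + 1) % m = r % m) ↔ m ∣ ((N + m - r) + 1) := by
      have he : (N + m - r) + 1 = (N + 1) + (m - r) := by omega
      rw [he, ← Nat.modEq_zero_iff_dvd]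
      constructor
      · intro h
        have h' : Nat.ModEq m ((N + 1) + (m - r)) (r + (m - r)) := Nat.ModEq.add_right _ h
        exact h'.trans hm0
      · intro h
        have h' : Nat.ModEq m ((N + 1) + (m - r)) (r + (m - r)) := h.trans hm0.symm
        exact Nat.ModEq.add_right_cancel' _ h'
    have hNe : N + 1 + m - r = (N + m - r) + 1 := by omega
    rw [hins, Finset.filter_insert, hNe, Nat.succ_div]
    by_cases hc : (N + 1) % m = r % m
    · rw [if_pos hc, if_pos (key.mp hc),
        Finset.card_insert_of_notMem (by simp), ih]
    · rw [if_neg hc, if_neg (fun h => hc (key.mpr h)), ih, add_zero]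


lemma disk_bound {p : ℕ} [Fact p.Prime] {f : Polynomial ℤ}
    (h1 : IsPermPoly f p) (h2 : IsPermPoly f (p ^ 2)) (N : ℕ) (hN : 1 ≤ N)
    (z : ℤ_[p]) (k : ℕ) :
    |(((Finset.Icc 1 N).filter fun n : ℕ =>
          ‖((f.eval (n : ℤ) : ℤ) : ℤ_[p]) - z‖ ≤ (p : ℝ) ^ (-(k : ℤ))).card : ℝ) / N
        - (p : ℝ) ^ (-(k : ℤ))| ≤ 1 / N := by
  have hp : (1 : ℕ) < p := (Fact.out : p.Prime).one_lt
  set m : ℕ := p ^ k with hm_def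
  have hm : 1 ≤ m := Nat.one_le_pow _ _ (by omega)
  haveI : NeZero m := ⟨by omega⟩
  set c : ℤ := (z.appr k : ℤ) with hc_def
  have happr : (p : ℤ_[p]) ^ k ∣ z - ((c : ℤ) : ℤ_[p]) := by
    have := PadicInt.appr_spec k z
    rw [Ideal.mem_span_singleton] at this
    push_cast
    exact this
  have int_dvd : ∀ w : ℤ, ((p : ℤ_[p]) ^ k ∣ ((w : ℤ_[p]))) ↔ ((p : ℤ) ^ k ∣ w) := by
    intro w
    rw [← Ideal.mem_span_singleton, ← PadicInt.norm_le_pow_iff_mem_span_pow,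
      PadicInt.norm_int_le_pow_iff_dvd]
  have perm := perm_pow h1 h2 k
  obtain ⟨x₀, hx₀⟩ := perm.surjective ((c : ZMod m))
  have hx₀' : (f.map (Int.castRingHom (ZMod m))).eval x₀ = ((c : ZMod m)) := hx₀
  have valinj : Function.Injective (ZMod.val (n := m)) :=
    Function.LeftInverse.injective ZMod.natCast_rightInverse
  have cond_iff : ∀ n : ℕ,
      (‖((f.eval (n : ℤ) : ℤ) : ℤ_[p]) - z‖ ≤ (p : ℝ) ^ (-(k : ℤ))) ↔ n % m = x₀.val := by
    intro n
    rw [PadicInt.norm_le_pow_iff_mem_span_pow, Ideal.mem_span_singleton]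
    have hw : ((f.eval (n : ℤ) : ℤ) : ℤ_[p]) - z
        = ((f.eval (n : ℤ) - c : ℤ) : ℤ_[p]) - (z - ((c : ℤ) : ℤ_[p])) := by
      push_cast; ring
    rw [hw, dvd_sub_left happr, int_dvd]
    have step1 : ((p : ℤ) ^ k ∣ f.eval (n : ℤ) - c)
        ↔ (((f.eval (n : ℤ) : ℤ) : ZMod m) = ((c : ZMod m))) := by
      constructor
      · intro h
        have h0 : ((f.eval (n : ℤ) - c : ℤ) : ZMod m) = 0 :=
          (ZMod.intCast_zmod_eq_zero_iff_dvd _ m).mpr (by rw [hm_def]; push_cast; exact h)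
        push_cast at h0
        exact sub_eq_zero.mp h0
      · intro h
        have h0 : ((f.eval (n : ℤ) - c : ℤ) : ZMod m) = 0 := by
          push_cast
          rw [h]
          ring
        have := (ZMod.intCast_zmod_eq_zero_iff_dvd _ m).mp h0
        rw [hm_def] at this
        push_cast at this
        exact this
    rw [step1, ← hx₀', ← eval_map_cast f m (n : ℤ)]
    rw [perm.injective.eq_iff]
    have hcast : (((n : ℤ)) : ZMod m) = ((n : ℕ) : ZMod m) := by push_cast; ring
    rw [hcast, ← valinj.eq_iff, ZMod.val_natCast]
  set r : ℕ := if x₀.val = 0 then m else x₀.val with hr_def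
  have hr1 : 1 ≤ r := by
    rw [hr_def]; split <;> omega
  have hr2 : r ≤ m := by
    have := ZMod.val_lt x₀
    rw [hr_def]; split <;> omega
  have hrm : r % m = x₀.val := by
    have hlt := ZMod.val_lt x₀
    rw [hr_def]; split
    · rename_i h; rw [h, Nat.mod_self]
    · exact Nat.mod_eq_of_lt hlt
  have hfilter : ((Finset.Icc 1 N).filter fun n : ℕ =>
        ‖((f.eval (n : ℤ) : ℤ) : ℤ_[p]) - z‖ ≤ (p : ℝ) ^ (-(k : ℤ)))
      = (Finset.Icc 1 N).filter (fun n => n % m = r % m) := by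
    apply Finset.filter_congr
    intro n _
    rw [cond_iff n, hrm]
  rw [hfilter, card_residue m hm r hr1 hr2 N]
  -- now the arithmetic
  set q : ℕ := (N + m - r) / m with hq_def
  have hdm := Nat.div_add_mod (N + m - r) m
  set rr : ℕ := (N + m - r) % m with hrr_def
  have hrrlt : rr < m := Nat.mod_lt _ (by omega)
  have hcast : (q : ℝ) * m + rr = (N : ℝ) + m - r := by
    have h1 : m * q + rr = N + m - r := hdm
    have h2 := congrArg (fun x : ℕ => (x : ℝ)) h1
    push_cast [Nat.cast_sub (show r ≤ N + m by omega)] at h2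
    linarith [h2]
  have hzp : (p : ℝ) ^ (-(k : ℤ)) = 1 / (m : ℝ) := by
    rw [zpow_neg, zpow_natCast, hm_def]
    push_cast
    ring
  have hmR : (1 : ℝ) ≤ (m : ℝ) := by exact_mod_cast hm
  have hNR : (1 : ℝ) ≤ (N : ℝ) := by exact_mod_cast hN
  have hr1R : (1 : ℝ) ≤ (r : ℝ) := by exact_mod_cast hr1
  have hr2R : (r : ℝ) ≤ (m : ℝ) := by exact_mod_cast hr2
  have hrrR : (rr : ℝ) ≤ (m : ℝ) - 1 := by
    have : rr + 1 ≤ m := hrrlt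
    exact_mod_cast by exact_mod_cast (by omega : rr ≤ m - 1)
  have hrr0 : (0 : ℝ) ≤ (rr : ℝ) := Nat.cast_nonneg rr
  rw [hzp]
  have hNpos : (0 : ℝ) < N := by linarith
  have hmpos : (0 : ℝ) < m := by linarith
  have hkey : |(q : ℝ) * m - N| ≤ m := by
    rw [abs_le]
    constructor
    · linarith
    · linarith
  have heq : (q : ℝ) / N - 1 / m = ((q : ℝ) * m - N) / (N * m) := by
    field_simp
  have h1N : (1 : ℝ) / N = m / (N * m) := by
    field_simp
  rw [heq, h1N, abs_div, abs_of_pos (by positivity : (0 : ℝ) < N * m)]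
  exact (div_le_div_iff_of_pos_right (by positivity)).mpr hkey

end PermPolyAux

theorem perm_poly_low_discrepancy (p : ℕ) [Fact p.Prime] (f : Polynomial ℤ)
    (h1 : IsPermPoly f p) (h2 : IsPermPoly f (p ^ 2)) :
    ∃ C : ℝ, ∀ N : ℕ, 1 ≤ N →
      padicDisc p (fun n => ((f.eval (n : ℤ) : ℤ) : ℤ_[p])) N ≤ C / N := by
  refine ⟨1, fun N hN => ?_⟩
  rw [padicDisc]
  apply ciSup_le
  intro zk
  simpa using PermPolyAux.disk_bound h1 h2 N hN zk.1 zk.2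
end

section
/- For any polynomial f with integer coefficients and any prime p, exactly one of the following holds: either D_N(f(n)) = O(1/N), or D_N(f(n)) does not converge to 0 as N → ∞ (in fact D_N(f(n)) ≥ p^{−3} for all N in the latter case). -/
open scoped Classical

section Aux

variable {p : ℕ} [Fact p.Prime] {f : Polynomial ℤ}

/-- Injectivity of `f` as a map modulo `p ^ k`, phrased over the integers. -/
def InjZ (p : ℕ) (f : Polynomial ℤ) (k : ℕ) : Prop :=
  ∀ x y : ℤ, (p : ℤ) ^ k ∣ (f.eval x - f.eval y) → (p : ℤ) ^ k ∣ (x - y)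

lemma taylorZ (f : Polynomial ℤ) (x t : ℤ) :
    ∃ c : ℤ, f.eval (x + t) = f.eval x + f.derivative.eval x * t + c * t ^ 2 :=
  ⟨(f.binomExpansion x t).1, (f.binomExpansion x t).2⟩

lemma primeIntP : Prime (p : ℤ) := Nat.prime_iff_prime_int.mp (Fact.out : p.Prime)

lemma deriv_not_dvd (h2 : InjZ p f 2) (x : ℤ) : ¬ (p : ℤ) ∣ f.derivative.eval x := by
  intro hdvd
  obtain ⟨c, hc⟩ := taylorZ f x p
  obtain ⟨a, ha⟩ := hdvd
  have hd : ((p : ℤ)) ^ 2 ∣ f.eval (x + p) - f.eval x := ⟨a + c, by rw [hc, ha]; ring⟩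
  have h := h2 (x + p) x hd
  have hp2 : ((p : ℤ)) ^ 2 ∣ (p : ℤ) := by simpa using h
  have hppos : (0 : ℤ) < p := by exact_mod_cast (Fact.out : p.Prime).pos
  have hle := Int.le_of_dvd hppos hp2
  have h2le : (2 : ℤ) ≤ p := by exact_mod_cast (Fact.out : p.Prime).two_le
  nlinarith

lemma exists_mul_cong (a m : ℤ) (ha : ¬ (p : ℤ) ∣ a) : ∃ t : ℤ, (p : ℤ) ∣ m - a * t := by
  have ha' : (a : ZMod p) ≠ 0 := by
    simpa [ZMod.intCast_zmod_eq_zero_iff_dvd] using ha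
  refine ⟨(((m : ZMod p) * (a : ZMod p)⁻¹).val : ℤ), ?_⟩
  rw [← ZMod.intCast_zmod_eq_zero_iff_dvd]
  push_cast
  rw [ZMod.natCast_val, ZMod.cast_id]
  rw [show (a : ZMod p) * ((m : ZMod p) * (a : ZMod p)⁻¹)
      = (m : ZMod p) * ((a : ZMod p) * (a : ZMod p)⁻¹) by ring,
    mul_inv_cancel₀ ha', mul_one, sub_self]

lemma injZ_one (h2 : InjZ p f 2) : InjZ p f 1 := by
  intro x y hdvd
  rw [pow_one] at hdvd ⊢
  obtain ⟨m, hm⟩ := hdvd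
  obtain ⟨t, ht⟩ := exists_mul_cong (f.derivative.eval y) m (deriv_not_dvd h2 y)
  obtain ⟨u, hu⟩ := ht
  obtain ⟨c, hc⟩ := taylorZ f y (t * p)
  have key : ((p : ℤ)) ^ 2 ∣ f.eval x - f.eval (y + t * p) :=
    ⟨u - c * t ^ 2, by linear_combination hm - hc + (p : ℤ) * hu⟩
  have h := h2 x (y + t * p) key
  have h1 : (p : ℤ) ∣ x - (y + t * p) :=
    dvd_trans (by simpa using pow_dvd_pow (p : ℤ) (by norm_num : 1 ≤ 2)) h
  have hxy : x - y = (x - (y + t * p)) + t * p := by ring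
  rw [hxy]
  exact dvd_add h1 (dvd_mul_left _ _)

lemma injZ_succ (h2 : InjZ p f 2) (k : ℕ) (hk : 1 ≤ k) (ih : InjZ p f k) :
    InjZ p f (k + 1) := by
  intro x y hdvd
  obtain ⟨t, ht⟩ := ih x y (dvd_trans (pow_dvd_pow _ (Nat.le_succ k)) hdvd)
  obtain ⟨c, hc⟩ := taylorZ f y ((p : ℤ) ^ k * t)
  have hx : x = y + (p : ℤ) ^ k * t := by linarith [ht.symm]
  have hev : f.eval x - f.eval y
      = f.derivative.eval y * ((p : ℤ) ^ k * t) + c * ((p : ℤ) ^ k * t) ^ 2 := by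
    rw [hx, hc]; ring
  have hsq : (p : ℤ) ^ (k + 1) ∣ c * ((p : ℤ) ^ k * t) ^ 2 := by
    have hd : (p : ℤ) ^ (k + 1) ∣ ((p : ℤ) ^ k) ^ 2 := by
      rw [← pow_mul]; exact pow_dvd_pow _ (by omega)
    exact (by ring : c * ((p : ℤ) ^ k * t) ^ 2 = (c * t ^ 2) * ((p : ℤ) ^ k) ^ 2) ▸
      hd.mul_left (c * t ^ 2)
  have hfir : (p : ℤ) ^ (k + 1) ∣ f.derivative.eval y * ((p : ℤ) ^ k * t) := by
    rw [hev] at hdvd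
    have := dvd_sub hdvd hsq
    simpa using this
  have hp0 : ((p : ℤ)) ^ k ≠ 0 :=
    pow_ne_zero _ (by exact_mod_cast (Fact.out : p.Prime).ne_zero)
  have hpt' : (p : ℤ) ∣ f.derivative.eval y * t := by
    rcases hfir with ⟨d, hd⟩
    rw [pow_succ] at hd
    exact ⟨d, mul_left_cancel₀ hp0 (by linear_combination hd)⟩
  have hpt : (p : ℤ) ∣ t :=
    (primeIntP.dvd_mul.mp hpt').resolve_left (deriv_not_dvd h2 y)
  obtain ⟨s, hs⟩ := hpt
  exact ⟨s, by rw [ht, hs, pow_succ]; ring⟩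

lemma injZ_all (h2 : InjZ p f 2) : ∀ k, InjZ p f k := by
  intro k
  induction k with
  | zero => intro x y _; simpa using one_dvd _
  | succ n ihn =>
    cases n with
    | zero => exact injZ_one h2
    | succ m => exact injZ_succ h2 (m + 1) (by omega) ihn

lemma cast_eq_iff_dvd (m : ℕ) (a b : ℤ) :
    ((a : ZMod m) = (b : ZMod m)) ↔ (m : ℤ) ∣ a - b := by
  rw [ZMod.intCast_eq_intCast_iff, Int.modEq_iff_dvd, dvd_sub_comm]

lemma exists_eval_cong (f : Polynomial ℤ) (h2 : InjZ p f 2) (k : ℕ) (z : ℤ) :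
    ∃ r : ℤ, (p : ℤ) ^ k ∣ f.eval r - z := by
  haveI : NeZero (p ^ k) := ⟨pow_ne_zero _ (Fact.out : p.Prime).ne_zero⟩
  set F : ZMod (p ^ k) → ZMod (p ^ k) :=
    fun a => (f.map (Int.castRingHom (ZMod (p ^ k)))).eval a with hF
  have hFint : ∀ x : ℤ, F (x : ZMod (p ^ k)) = ((f.eval x : ℤ) : ZMod (p ^ k)) :=
    fun x => Polynomial.eval_intCast_map _ _ _
  have hcast : ((p ^ k : ℕ) : ℤ) = (p : ℤ) ^ k := by push_cast; ring
  have hinj : Function.Injective F := by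
    intro a b hab
    obtain ⟨x, rfl⟩ := ZMod.intCast_surjective a
    obtain ⟨y, rfl⟩ := ZMod.intCast_surjective b
    rw [hFint, hFint] at hab
    have hdvd : (p : ℤ) ^ k ∣ f.eval x - f.eval y := by
      rw [← hcast]; exact (cast_eq_iff_dvd _ _ _).mp hab
    have := injZ_all h2 k x y hdvd
    exact (cast_eq_iff_dvd _ _ _).mpr (by rw [hcast]; exact this)
  obtain ⟨a, ha⟩ := Finite.injective_iff_surjective.mp hinj (z : ZMod (p ^ k))
  obtain ⟨r, rfl⟩ := ZMod.intCast_surjective a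
  rw [hFint] at ha
  exact ⟨r, by rw [← hcast]; exact (cast_eq_iff_dvd _ _ _).mp ha⟩

lemma exists_missed (f : Polynomial ℤ) (h2 : ¬ InjZ p f 2) :
    ∃ z : ℤ, ∀ n : ℤ, ¬ (p : ℤ) ^ 2 ∣ f.eval n - z := by
  haveI : NeZero (p ^ 2) := ⟨pow_ne_zero _ (Fact.out : p.Prime).ne_zero⟩
  simp only [InjZ, not_forall] at h2
  obtain ⟨x, y, hfd, hxy⟩ := h2
  set F : ZMod (p ^ 2) → ZMod (p ^ 2) :=
    fun a => (f.map (Int.castRingHom (ZMod (p ^ 2)))).eval a with hF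
  have hFint : ∀ x : ℤ, F (x : ZMod (p ^ 2)) = ((f.eval x : ℤ) : ZMod (p ^ 2)) :=
    fun x => Polynomial.eval_intCast_map _ _ _
  have hcast : ((p ^ 2 : ℕ) : ℤ) = (p : ℤ) ^ 2 := by push_cast; ring
  have hnotinj : ¬ Function.Injective F := by
    intro hinj
    apply hxy
    rw [← hcast]
    refine (cast_eq_iff_dvd _ _ _).mp (hinj ?_)
    rw [hFint, hFint]
    exact (cast_eq_iff_dvd _ _ _).mpr (by rw [hcast]; exact hfd)
  have hnotsurj : ¬ Function.Surjective F :=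
    fun hs => hnotinj (Finite.injective_iff_surjective.mpr hs)
  rw [Function.Surjective] at hnotsurj
  push_neg at hnotsurj
  obtain ⟨w, hw⟩ := hnotsurj
  obtain ⟨z, rfl⟩ := ZMod.intCast_surjective w
  refine ⟨z, fun n hn => hw (n : ZMod (p ^ 2)) ?_⟩
  rw [hFint]
  exact (cast_eq_iff_dvd _ _ _).mpr (by rw [hcast]; exact hn)

lemma card_residue (m : ℕ) (hm : 0 < m) (v : ℕ) (N : ℕ) :
    |((((Finset.Icc 1 N).filter (fun n => n ≡ v [MOD m])).card : ℚ)) * m - N| ≤ m := by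
  have hicc : Finset.Icc 1 N = Finset.Ioc 0 N := by
    rw [show (1 : ℕ) = 0 + 1 from rfl, Finset.Icc_add_one_left_eq_Ioc]
  rw [hicc, show ((Finset.Ioc 0 N).filter (fun n => n ≡ v [MOD m]))
      = {x ∈ Finset.Ioc 0 N | x ≡ v [MOD m]} from Finset.filter_congr fun x _ => Iff.rfl]
  have h := Nat.Ioc_filter_modEq_card 0 N hm v
  have hm' : (0 : ℚ) < m := by exact_mod_cast hm
  set A := ⌊((N : ℚ) - v) / m⌋ with hA
  set B := ⌊(((0 : ℕ) : ℚ) - v) / m⌋ with hB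
  have hA1 : (A : ℚ) * m ≤ (N : ℚ) - v := (le_div_iff₀ hm').mp (Int.floor_le _)
  have hA2 : (N : ℚ) - v < ((A : ℚ) + 1) * m := by
    have := Int.lt_floor_add_one (((N : ℚ) - v) / m)
    calc (N : ℚ) - v = (((N : ℚ) - v) / m) * m := by field_simp
      _ < ((A : ℚ) + 1) * m := by
          apply mul_lt_mul_of_pos_right _ hm'
          rw [hA]
          push_cast
          exact this
  have hB1 : (B : ℚ) * m ≤ (((0 : ℕ) : ℚ)) - v := (le_div_iff₀ hm').mp (Int.floor_le _)
  have hB2 : (((0 : ℕ) : ℚ)) - v < ((B : ℚ) + 1) * m := by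
    have := Int.lt_floor_add_one ((((0 : ℕ) : ℚ) - v) / m)
    calc (((0 : ℕ) : ℚ)) - v = ((((0 : ℕ) : ℚ) - v) / m) * m := by field_simp
      _ < ((B : ℚ) + 1) * m := by
          apply mul_lt_mul_of_pos_right _ hm'
          rw [hB]
          push_cast
          exact this
  have hNn : (0 : ℚ) ≤ (N : ℚ) := by positivity
  have hd : (0 : ℤ) ≤ A - B := by
    by_contra hcon
    push_neg at hcon
    have : A - B ≤ -1 := by omega
    have hQ : ((A : ℚ) - B) ≤ -1 := by exact_mod_cast this
    simp only [Nat.cast_zero] at hB1 hB2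
    nlinarith
  have hcardQ : ((({x ∈ Finset.Ioc 0 N | x ≡ v [MOD m]}).card : ℚ)) = (A : ℚ) - B := by
    have : (({x ∈ Finset.Ioc 0 N | x ≡ v [MOD m]}).card : ℤ) = A - B := by
      rw [h, max_eq_left hd]
    exact_mod_cast this
  rw [hcardQ, abs_le]
  constructor
  · simp only [Nat.cast_zero] at hB1 hB2
    nlinarith
  · simp only [Nat.cast_zero] at hB1 hB2
    nlinarith

lemma norm_sub_int_le_iff (k : ℕ) (w z : ℤ) :
    ‖(w : ℤ_[p]) - (z : ℤ_[p])‖ ≤ (p : ℝ) ^ (-(k : ℤ)) ↔ (p : ℤ) ^ k ∣ w - z := by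
  rw [show (w : ℤ_[p]) - (z : ℤ_[p]) = ((w - z : ℤ) : ℤ_[p]) by push_cast; ring]
  exact PadicInt.norm_int_le_pow_iff_dvd

lemma mem_ball_iff_dvd (k : ℕ) (z : ℤ_[p]) (w : ℤ) :
    ‖(w : ℤ_[p]) - z‖ ≤ (p : ℝ) ^ (-(k : ℤ)) ↔ (p : ℤ) ^ k ∣ w - (z.appr k : ℤ) := by
  have hz : ‖z - ((z.appr k : ℤ) : ℤ_[p])‖ ≤ (p : ℝ) ^ (-(k : ℤ)) := by
    rw [PadicInt.norm_le_pow_iff_mem_span_pow]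
    push_cast
    exact PadicInt.appr_spec k z
  rw [← norm_sub_int_le_iff]
  constructor
  · intro h
    calc ‖(w : ℤ_[p]) - ((z.appr k : ℤ) : ℤ_[p])‖
        = ‖((w : ℤ_[p]) - z) + (z - ((z.appr k : ℤ) : ℤ_[p]))‖ := by ring_nf
      _ ≤ max ‖(w : ℤ_[p]) - z‖ ‖z - ((z.appr k : ℤ) : ℤ_[p])‖ := PadicInt.nonarchimedean _ _
      _ ≤ _ := max_le h hz
  · intro h
    calc ‖(w : ℤ_[p]) - z‖
        = ‖((w : ℤ_[p]) - ((z.appr k : ℤ) : ℤ_[p])) + (((z.appr k : ℤ) : ℤ_[p]) - z)‖ := by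
          ring_nf
      _ ≤ max ‖(w : ℤ_[p]) - ((z.appr k : ℤ) : ℤ_[p])‖ ‖((z.appr k : ℤ) : ℤ_[p]) - z‖ :=
          PadicInt.nonarchimedean _ _
      _ ≤ _ := max_le h (by rwa [norm_sub_rev])

lemma caseA_term_bound (f : Polynomial ℤ) (h2 : InjZ p f 2) {N : ℕ} (hN : 1 ≤ N)
    (z : ℤ_[p]) (k : ℕ) :
    |((((Finset.Icc 1 N).filter fun n : ℕ =>
        ‖((f.eval (n : ℤ) : ℤ) : ℤ_[p]) - z‖ ≤ (p : ℝ) ^ (-(k : ℤ))).card : ℝ)) / N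
      - (p : ℝ) ^ (-(k : ℤ))| ≤ 1 / N := by
  have hppos : 0 < p := (Fact.out : p.Prime).pos
  set z' : ℤ := (z.appr k : ℤ) with hz'
  obtain ⟨r, hr⟩ := exists_eval_cong f h2 k z'
  have hmpos : 0 < p ^ k := pow_pos hppos k
  have hmZ : ((p ^ k : ℕ) : ℤ) = (p : ℤ) ^ k := by push_cast; ring
  have hmne : ((p ^ k : ℕ) : ℤ) ≠ 0 := by exact_mod_cast hmpos.ne'
  set v : ℕ := (r % ((p ^ k : ℕ) : ℤ)).toNat with hv
  have hvr : (v : ℤ) = r % ((p ^ k : ℕ) : ℤ) :=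
    Int.toNat_of_nonneg (Int.emod_nonneg r hmne)
  have hfilter : ((Finset.Icc 1 N).filter fun n : ℕ =>
        ‖((f.eval (n : ℤ) : ℤ) : ℤ_[p]) - z‖ ≤ (p : ℝ) ^ (-(k : ℤ)))
      = (Finset.Icc 1 N).filter (fun n => n ≡ v [MOD p ^ k]) := by
    refine Finset.filter_congr fun n _ => ?_
    rw [mem_ball_iff_dvd k z, ← hz']
    have i1 : (p : ℤ) ^ k ∣ f.eval (n : ℤ) - z' ↔ (p : ℤ) ^ k ∣ f.eval (n : ℤ) - f.eval r := by
      constructor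
      · intro h
        have hd := dvd_sub h hr
        have he : f.eval (n : ℤ) - f.eval r = (f.eval (n : ℤ) - z') - (f.eval r - z') := by ring
        rw [he]; exact hd
      · intro h
        have hd := dvd_add h hr
        have he : f.eval (n : ℤ) - z' = (f.eval (n : ℤ) - f.eval r) + (f.eval r - z') := by ring
        rw [he]; exact hd
    have i2 : (p : ℤ) ^ k ∣ f.eval (n : ℤ) - f.eval r ↔ (p : ℤ) ^ k ∣ (n : ℤ) - r :=
      ⟨fun h => injZ_all h2 k (n : ℤ) r h,
       fun h => dvd_trans h (Polynomial.sub_dvd_eval_sub _ _ f)⟩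
    rw [i1, i2, ← Int.natCast_modEq_iff]
    have i3 : ((n : ℤ) ≡ (v : ℤ) [ZMOD ((p ^ k : ℕ) : ℤ)])
        ↔ ((n : ℤ) ≡ r [ZMOD ((p ^ k : ℕ) : ℤ)]) := by
      constructor
      · intro h
        exact h.trans (by rw [hvr]; exact Int.emod_emod_of_dvd r dvd_rfl)
      · intro h
        exact h.trans (by rw [hvr]; exact (Int.emod_emod_of_dvd r dvd_rfl).symm)
    rw [i3, Int.modEq_iff_dvd, hmZ]
    exact dvd_sub_comm
  rw [hfilter]
  have hcardQ := card_residue (p ^ k) hmpos v N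
  have hcardR : |((((Finset.Icc 1 N).filter (fun n => n ≡ v [MOD p ^ k])).card : ℝ))
      * ((p ^ k : ℕ) : ℝ) - (N : ℝ)| ≤ ((p ^ k : ℕ) : ℝ) := by exact_mod_cast hcardQ
  set c : ℝ := (((Finset.Icc 1 N).filter (fun n => n ≡ v [MOD p ^ k])).card : ℝ) with hc
  have hNpos : (0 : ℝ) < N := by exact_mod_cast hN
  have hM : (0 : ℝ) < ((p ^ k : ℕ) : ℝ) := by exact_mod_cast hmpos
  have hzp : (p : ℝ) ^ (-(k : ℤ)) = (((p ^ k : ℕ) : ℝ))⁻¹ := by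
    rw [zpow_neg, zpow_natCast]
    push_cast
    ring
  rw [hzp]
  have key : c / N - (((p ^ k : ℕ) : ℝ))⁻¹
      = (c * ((p ^ k : ℕ) : ℝ) - N) / (N * ((p ^ k : ℕ) : ℝ)) := by
    field_simp
  have hden : (0 : ℝ) < (N : ℝ) * ((p ^ k : ℕ) : ℝ) := by positivity
  rw [key, abs_div, abs_of_pos hden]
  calc |c * ((p ^ k : ℕ) : ℝ) - N| / (N * ((p ^ k : ℕ) : ℝ))
      ≤ ((p ^ k : ℕ) : ℝ) / (N * ((p ^ k : ℕ) : ℝ)) := by gcongr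
    _ = 1 / N := by field_simp

lemma term_le_one {N : ℕ} (hN : 1 ≤ N) (x : ℕ → ℤ_[p]) (zk : ℤ_[p] × ℕ) :
    |(((Finset.Icc 1 N).filter fun n => ‖x n - zk.1‖ ≤ (p : ℝ) ^ (-(zk.2 : ℤ))).card : ℝ) / N
      - (p : ℝ) ^ (-(zk.2 : ℤ))| ≤ 1 := by
  have hp1 : (1 : ℝ) < p := by exact_mod_cast (Fact.out : p.Prime).one_lt
  have hN' : (0 : ℝ) < N := by exact_mod_cast hN
  have hcard : ((((Finset.Icc 1 N).filter
      fun n => ‖x n - zk.1‖ ≤ (p : ℝ) ^ (-(zk.2 : ℤ))).card : ℝ)) ≤ N := by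
    have h1 := Finset.card_filter_le (Finset.Icc 1 N)
      (fun n => ‖x n - zk.1‖ ≤ (p : ℝ) ^ (-(zk.2 : ℤ)))
    have h2 : (Finset.Icc 1 N).card = N := by rw [Nat.card_Icc]; omega
    exact_mod_cast le_trans h1 (le_of_eq h2)
  have hzp0 : (0 : ℝ) < (p : ℝ) ^ (-(zk.2 : ℤ)) := zpow_pos (by linarith) _
  have hzp1 : (p : ℝ) ^ (-(zk.2 : ℤ)) ≤ 1 := by
    calc (p : ℝ) ^ (-(zk.2 : ℤ)) ≤ (p : ℝ) ^ (0 : ℤ) :=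
          zpow_le_zpow_right₀ hp1.le (by omega)
      _ = 1 := zpow_zero _
  rw [abs_le]
  constructor
  · have hnn : (0 : ℝ) ≤ (((Finset.Icc 1 N).filter
        fun n => ‖x n - zk.1‖ ≤ (p : ℝ) ^ (-(zk.2 : ℤ))).card : ℝ) / N := by positivity
    linarith
  · have hd1 : (((Finset.Icc 1 N).filter
        fun n => ‖x n - zk.1‖ ≤ (p : ℝ) ^ (-(zk.2 : ℤ))).card : ℝ) / N ≤ 1 := by
      rw [div_le_one hN']; exact hcard
    linarith

lemma disc_bddAbove {N : ℕ} (hN : 1 ≤ N) (x : ℕ → ℤ_[p]) :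
    BddAbove (Set.range fun zk : ℤ_[p] × ℕ =>
      |(((Finset.Icc 1 N).filter fun n => ‖x n - zk.1‖ ≤ (p : ℝ) ^ (-(zk.2 : ℤ))).card : ℝ) / N
        - (p : ℝ) ^ (-(zk.2 : ℤ))|) :=
  ⟨1, by rintro _ ⟨zk, rfl⟩; exact term_le_one hN x zk⟩

end Aux

theorem poly_discrepancy_dichotomy (p : ℕ) [Fact p.Prime] (f : Polynomial ℤ) :
    Xor'
      (∃ C : ℝ, ∀ N : ℕ, 1 ≤ N →
        padicDisc p (fun n => ((f.eval (n : ℤ) : ℤ) : ℤ_[p])) N ≤ C / N)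
      (¬ Filter.Tendsto (fun N => padicDisc p (fun n => ((f.eval (n : ℤ) : ℤ) : ℤ_[p])) N)
          Filter.atTop (nhds 0) ∧
        ∀ N : ℕ, 1 ≤ N →
          (p : ℝ) ^ (-3 : ℤ) ≤ padicDisc p (fun n => ((f.eval (n : ℤ) : ℤ) : ℤ_[p])) N) := by
  have hp1 : (1 : ℝ) < p := by exact_mod_cast (Fact.out : p.Prime).one_lt
  by_cases h2 : InjZ p f 2
  · -- permutation polynomial case
    have hbound : ∀ N : ℕ, 1 ≤ N →
        padicDisc p (fun n => ((f.eval (n : ℤ) : ℤ) : ℤ_[p])) N ≤ 1 / N := by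
      intro N hN
      rw [padicDisc]
      exact ciSup_le fun zk => caseA_term_bound f h2 hN zk.1 zk.2
    left
    refine ⟨⟨1, hbound⟩, ?_⟩
    rintro ⟨hnt, -⟩
    apply hnt
    apply squeeze_zero' ?_ ?_ tendsto_one_div_atTop_nhds_zero_nat
    · filter_upwards [Filter.eventually_ge_atTop 1] with N hN
      have hb := disc_bddAbove hN (fun n => ((f.eval (n : ℤ) : ℤ) : ℤ_[p]))
      rw [padicDisc]
      exact le_trans (abs_nonneg _) (le_ciSup hb ((0, 0) : ℤ_[p] × ℕ))
    · filter_upwards [Filter.eventually_ge_atTop 1] with N hN using hbound N hN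
  · -- non-permutation case
    obtain ⟨z, hz⟩ := exists_missed f h2
    have hkey : ∀ N : ℕ, 1 ≤ N →
        (p : ℝ) ^ (-2 : ℤ) ≤ padicDisc p (fun n => ((f.eval (n : ℤ) : ℤ) : ℤ_[p])) N := by
      intro N hN
      have hfe : ((Finset.Icc 1 N).filter fun n : ℕ =>
          ‖((f.eval (n : ℤ) : ℤ) : ℤ_[p]) - ((z : ℤ_[p]))‖ ≤ (p : ℝ) ^ (-((2 : ℕ) : ℤ))) = ∅ := by
        rw [Finset.filter_eq_empty_iff]
        intro n _
        rw [norm_sub_int_le_iff]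
        exact hz (n : ℤ)
      rw [padicDisc]
      refine le_trans ?_
        (le_ciSup (disc_bddAbove hN _) ((((z : ℤ_[p])), 2) : ℤ_[p] × ℕ))
      show (p : ℝ) ^ (-2 : ℤ) ≤ |((((Finset.Icc 1 N).filter fun n : ℕ =>
          ‖((f.eval (n : ℤ) : ℤ) : ℤ_[p]) - ((z : ℤ_[p]))‖ ≤ (p : ℝ) ^ (-((2 : ℕ) : ℤ))).card : ℝ))
            / N - (p : ℝ) ^ (-((2 : ℕ) : ℤ))|
      rw [hfe, Finset.card_empty]
      have h20 : (0 : ℝ) < (p : ℝ) ^ (-((2 : ℕ) : ℤ)) := zpow_pos (by linarith) _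
      rw [show ((0 : ℕ) : ℝ) / (N : ℝ) - (p : ℝ) ^ (-((2 : ℕ) : ℤ))
          = -((p : ℝ) ^ (-((2 : ℕ) : ℤ))) by push_cast; ring, abs_neg, abs_of_pos h20]
      norm_num
    have hB : (¬ Filter.Tendsto
          (fun N => padicDisc p (fun n => ((f.eval (n : ℤ) : ℤ) : ℤ_[p])) N)
          Filter.atTop (nhds 0)) ∧
        ∀ N : ℕ, 1 ≤ N →
          (p : ℝ) ^ (-3 : ℤ) ≤ padicDisc p (fun n => ((f.eval (n : ℤ) : ℤ) : ℤ_[p])) N := by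
      constructor
      · intro ht
        have hlt := ht.eventually_lt_const
          (show (0 : ℝ) < (p : ℝ) ^ (-2 : ℤ) from zpow_pos (by linarith) _)
        obtain ⟨N, hN1, hN2⟩ := (hlt.and (Filter.eventually_ge_atTop 1)).exists
        exact absurd (hkey N hN2) (not_le.mpr hN1)
      · intro N hN
        exact le_trans (zpow_le_zpow_right₀ hp1.le (by norm_num)) (hkey N hN)
    refine Or.inr ⟨hB, ?_⟩
    rintro ⟨C, hC⟩
    set N : ℕ := max 1 (⌊C * (p : ℝ) ^ (3 : ℕ)⌋₊ + 1) with hNdef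
    have hN1 : 1 ≤ N := le_max_left _ _
    have hD := hC N hN1
    have hlow := hB.2 N hN1
    have hNR : (0 : ℝ) < N := by exact_mod_cast hN1
    have hNgt : C * (p : ℝ) ^ (3 : ℕ) < N := by
      calc C * (p : ℝ) ^ (3 : ℕ) < ((⌊C * (p : ℝ) ^ (3 : ℕ)⌋₊ + 1 : ℕ) : ℝ) := by
            push_cast
            exact Nat.lt_floor_add_one _
        _ ≤ N := Nat.cast_le.mpr (le_max_right _ _)
    have hle : (p : ℝ) ^ (-3 : ℤ) ≤ C / N := le_trans hlow hD
    rw [le_div_iff₀ hNR] at hle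
    have hapos : (0 : ℝ) < (p : ℝ) ^ (-3 : ℤ) := zpow_pos (by linarith) _
    have hinv : (p : ℝ) ^ (-3 : ℤ) * (p : ℝ) ^ (3 : ℕ) = 1 := by
      rw [← zpow_natCast (p : ℝ) 3, ← zpow_add₀ (by linarith : (p : ℝ) ≠ 0)]
      norm_num
    have h4 : (p : ℝ) ^ (-3 : ℤ) * (C * (p : ℝ) ^ (3 : ℕ)) = C := by
      rw [show (p : ℝ) ^ (-3 : ℤ) * (C * (p : ℝ) ^ (3 : ℕ))
          = ((p : ℝ) ^ (-3 : ℤ) * (p : ℝ) ^ (3 : ℕ)) * C from by ring, hinv, one_mul]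
    have h5 := mul_lt_mul_of_pos_left hNgt hapos
    linarith
end

section
/- Let p ≡ ±2 (mod 5) be a prime and a ∈ ℤ with p ∤ a. Let c ∈ ℤ satisfy 5c ≡ 1 (mod p). Then the polynomial f(x) = x^5 + a·x³ + c·a²·x has derivative f'(x) = 5x⁴ + 3a·x² + c·a², and the congruence f'(x) ≡ 0 (mod p) has no solution x ∈ ℤ. -/
lemma d2' : ¬ IsSquare (((2:ℕ) : ZMod 5)) := by decide
lemma d3' : ¬ IsSquare (((3:ℕ) : ZMod 5)) := by decide

lemma five_not_square (p : ℕ) (hp : p.Prime) (hp2 : p ≠ 2)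
    (hp5 : p % 5 = 2 ∨ p % 5 = 3) : ¬ IsSquare (5 : ZMod p) := by
  haveI : Fact p.Prime := ⟨hp⟩
  haveI : Fact (Nat.Prime 5) := ⟨by norm_num⟩
  have h := (ZMod.exists_sq_eq_prime_iff_of_mod_four_eq_one (p := 5) (q := p)
    (by norm_num) hp2).symm
  rw [show ((5 : ℕ) : ZMod p) = (5 : ZMod p) by push_cast; ring] at h
  rw [h]
  have hcast : ((p : ZMod 5)) = ((p % 5 : ℕ) : ZMod 5) := (ZMod.natCast_mod p 5).symm
  rw [hcast]
  rcases hp5 with h5 | h5 <;> rw [h5]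
  · exact d2'
  · exact d3'

lemma key2 : ∀ A C X : ZMod 2, A ≠ 0 → 5 * C = 1 →
    5 * X ^ 4 + 3 * A * X ^ 2 + C * A ^ 2 ≠ 0 := by decide

theorem quintic_derivative_no_root (p : ℕ) (hp : p.Prime)
    (hp5 : p % 5 = 2 ∨ p % 5 = 3) (a : ℤ) (ha : ¬ (p : ℤ) ∣ a)
    (c : ℤ) (hc : (p : ℤ) ∣ 5 * c - 1) :
    (∀ x : ℤ,
      (Polynomial.X ^ 5 + Polynomial.C a * Polynomial.X ^ 3
        + Polynomial.C (c * a ^ 2) * Polynomial.X).derivative.eval x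
        = 5 * x ^ 4 + 3 * a * x ^ 2 + c * a ^ 2) ∧
    ∀ x : ℤ, ¬ (p : ℤ) ∣ (5 * x ^ 4 + 3 * a * x ^ 2 + c * a ^ 2) := by
  haveI : Fact p.Prime := ⟨hp⟩
  constructor
  · intro x
    simp [Polynomial.derivative_pow]
    ring
  · intro x hdvd
    set A : ZMod p := (a : ZMod p) with hAdef
    set C : ZMod p := (c : ZMod p) with hCdef
    set X : ZMod p := (x : ZMod p) with hXdef
    have hA : A ≠ 0 := by
      rw [hAdef, Ne, ZMod.intCast_zmod_eq_zero_iff_dvd]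
      exact ha
    have hC : 5 * C = 1 := by
      have := (ZMod.intCast_zmod_eq_zero_iff_dvd (5 * c - 1) p).mpr hc
      push_cast at this
      linear_combination this
    have hX : 5 * X ^ 4 + 3 * A * X ^ 2 + C * A ^ 2 = 0 := by
      have := (ZMod.intCast_zmod_eq_zero_iff_dvd _ p).mpr hdvd
      push_cast at this
      linear_combination this
    rcases eq_or_ne p 2 with rfl | hp2
    · exact key2 A C X hA hC hX
    · have h25 : 25 * X ^ 4 + 15 * A * X ^ 2 + A ^ 2 = 0 := by
        linear_combination 5 * hX - A ^ 2 * hC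
      have hsq : (10 * X ^ 2 + 3 * A) ^ 2 = 5 * A ^ 2 := by
        linear_combination 4 * h25
      apply five_not_square p hp hp2 hp5
      refine ⟨(10 * X ^ 2 + 3 * A) * A⁻¹, ?_⟩
      field_simp
      linear_combination (-4 : ZMod p) * h25
end
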